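/- arXiv:1507.02908 — 4 statements merged into one kernel-verified Lean document; each statement's English description precedes it below -/
import Mathlib

section
/- For all real numbers b > 0, s with 0 < s and t ≥ b, the function g(t, s) := (t + s)·ln(1 + s/t)/s is nonincreasing in t on [b, ∞) and nondecreasing in s; consequently, if s ≤ δ·b for δ > 0, then g(t, s) ≤ (1 + δ)·ln(1 + δ)/δ. -/
/-
Writing x = s / t, the ratio is g(t, s) = (1 + x) log(1 + x) / x, the slope of the convex
function u ↦ u log u between u = 1 and u = 1 + x. Slopes of a convex function from a fixed
point increase, so g is nondecreasing in x, hence nonincreasing in t and nondecreasing in s;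
and s ≤ δ b ≤ δ t gives x ≤ δ.
-/

open Real Set

lemma monotoneOn_one_add_mul_log_one_add_div :
    MonotoneOn (fun x : ℝ => (1 + x) * log (1 + x) / x) (Ioi 0) := by
  intro x (hx : 0 < x) y (hy : 0 < y) hxy
  have hslope := convexOn_mul_log.secant_mono (a := 1) (x := 1 + x) (y := 1 + y)
    (by norm_num) (by simp only [mem_Ici]; linarith) (by simp only [mem_Ici]; linarith)
    (by linarith) (by linarith) (by linarith)
  simpa using hslope

lemma add_mul_log_one_add_div_eq {t s : ℝ} (ht : 0 < t) (hs : 0 < s) :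
    (t + s) * log (1 + s / t) / s = (1 + s / t) * log (1 + s / t) / (s / t) := by
  field_simp

theorem stmt_3_general (b δ : ℝ) (hb : 0 < b) :
    (∀ s : ℝ, 0 < s → ∀ t₁ t₂ : ℝ, b ≤ t₁ → t₁ ≤ t₂ →
      (t₂ + s) * Real.log (1 + s / t₂) / s ≤ (t₁ + s) * Real.log (1 + s / t₁) / s) ∧
    (∀ t : ℝ, b ≤ t → ∀ s₁ s₂ : ℝ, 0 < s₁ → s₁ ≤ s₂ →
      (t + s₁) * Real.log (1 + s₁ / t) / s₁ ≤ (t + s₂) * Real.log (1 + s₂ / t) / s₂) ∧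
    (∀ t s : ℝ, b ≤ t → 0 < s → s ≤ δ * b →
      (t + s) * Real.log (1 + s / t) / s ≤ (1 + δ) * Real.log (1 + δ) / δ) := by
  have hmono := monotoneOn_one_add_mul_log_one_add_div
  refine ⟨fun s hs t₁ t₂ ht₁ ht₁₂ => ?_, fun t ht s₁ s₂ hs₁ hs₁₂ => ?_, fun t s ht hs hsδ => ?_⟩
  · have ht₁_pos : 0 < t₁ := hb.trans_le ht₁
    have ht₂_pos : 0 < t₂ := ht₁_pos.trans_le ht₁₂
    rw [add_mul_log_one_add_div_eq ht₁_pos hs, add_mul_log_one_add_div_eq ht₂_pos hs]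
    exact hmono (div_pos hs ht₂_pos) (div_pos hs ht₁_pos) (by gcongr)
  · have ht_pos : 0 < t := hb.trans_le ht
    have hs₂ : 0 < s₂ := hs₁.trans_le hs₁₂
    rw [add_mul_log_one_add_div_eq ht_pos hs₁, add_mul_log_one_add_div_eq ht_pos hs₂]
    exact hmono (div_pos hs₁ ht_pos) (div_pos hs₂ ht_pos) (by gcongr)
  · have ht_pos : 0 < t := hb.trans_le ht
    have hx : 0 < s / t := div_pos hs ht_pos
    have hxδ : s / t ≤ δ := by
      rw [div_le_iff₀ ht_pos]
      nlinarith
    rw [add_mul_log_one_add_div_eq ht_pos hs]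
    exact hmono hx (hx.trans_le hxδ) hxδ

theorem stmt_3 (b δ : ℝ) (hb : 0 < b) (hδ : 0 < δ) :
    (∀ s : ℝ, 0 < s → ∀ t₁ t₂ : ℝ, b ≤ t₁ → t₁ ≤ t₂ →
      (t₂ + s) * Real.log (1 + s / t₂) / s ≤ (t₁ + s) * Real.log (1 + s / t₁) / s) ∧
    (∀ t : ℝ, b ≤ t → ∀ s₁ s₂ : ℝ, 0 < s₁ → s₁ ≤ s₂ →
      (t + s₁) * Real.log (1 + s₁ / t) / s₁ ≤ (t + s₂) * Real.log (1 + s₂ / t) / s₂) ∧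
    (∀ t s : ℝ, b ≤ t → 0 < s → s ≤ δ * b →
      (t + s) * Real.log (1 + s / t) / s ≤ (1 + δ) * Real.log (1 + δ) / δ) :=
  stmt_3_general b δ hb
end

section
/- Let b > 0, s > 0, t ≥ 0 with s ≤ δ·b for some δ > 0, and suppose the utility is u := min(s, b·s/(t + s)) and the potential contribution is φ := s if t + s ≤ b, φ := b − t + b·ln((t+s)/b) if t ≤ b < t + s, and φ := b·ln((t+s)/t) if t ≥ b. Then u ≤ φ. -/
/-!
In each regime the share `b * s / (t + s)` is compared with the potential through the
tangent-line bound `1 - y / x ≤ log (x / y)`. When `t ≤ b < t + s` what remains is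
`(b - t) * (t + s - b) / (t + s) ≥ 0`; when `b < t` the share is exactly `b * (1 - t / (t + s))`.
-/

open Real

lemma one_sub_div_le_log_div {x y : ℝ} (hx : 0 < x) (hy : 0 < y) :
    1 - y / x ≤ log (x / y) := by
  simpa only [inv_div] using one_sub_inv_le_log_of_pos (div_pos hx hy)

lemma mul_div_add_le_sub_add_mul_log {b s t : ℝ} (hb : 0 < b) (htb : t ≤ b) (hbts : b < t + s) :
    b * s / (t + s) ≤ b - t + b * log ((t + s) / b) := by
  have hts : 0 < t + s := hb.trans hbts
  have hgap : b * s / (t + s) =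
      b - t + b * (1 - b / (t + s)) - (b - t) * (t + s - b) / (t + s) := by
    field_simp
    ring
  have hgap_nonneg : 0 ≤ (b - t) * (t + s - b) / (t + s) :=
    div_nonneg (mul_nonneg (sub_nonneg.2 htb) (sub_nonneg.2 hbts.le)) hts.le
  have hlog := mul_le_mul_of_nonneg_left (one_sub_div_le_log_div hts hb) hb.le
  linarith

lemma mul_div_add_le_mul_log {b s t : ℝ} (hb : 0 ≤ b) (ht : 0 < t) (hts : 0 < t + s) :
    b * s / (t + s) ≤ b * log ((t + s) / t) :=
  calc b * s / (t + s) = b * (1 - t / (t + s)) := by field_simp; ring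
    _ ≤ b * log ((t + s) / t) := mul_le_mul_of_nonneg_left (one_sub_div_le_log_div hts ht) hb

theorem stmt_8_general (b s t : ℝ) (hb : 0 < b) (hs : 0 < s) :
    min s (b * s / (t + s)) ≤
      if t + s ≤ b then s
      else if t ≤ b then b - t + b * Real.log ((t + s) / b)
      else b * Real.log ((t + s) / t) := by
  split_ifs with hsmall hmid
  · exact min_le_left _ _
  · exact (min_le_right _ _).trans (mul_div_add_le_sub_add_mul_log hb hmid (not_le.1 hsmall))
  · have ht : 0 < t := hb.trans (not_le.1 hmid)
    exact (min_le_right _ _).trans (mul_div_add_le_mul_log hb.le ht (by linarith))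

theorem stmt_8 (b s t δ : ℝ) (hb : 0 < b) (hs : 0 < s) (ht : 0 ≤ t)
    (hδ : 0 < δ) (hsb : s ≤ δ * b) :
    min s (b * s / (t + s)) ≤
      if t + s ≤ b then s
      else if t ≤ b then b - t + b * Real.log ((t + s) / b)
      else b * Real.log ((t + s) / t) :=
  stmt_8_general b s t hb hs
end

section
/- Let b > 0, δ ∈ (0, 1], s = δ·b, and t ∈ [0, b) with t + s > b. Define R(t) := (t + δb)·(b − t + b·ln((t + δb)/b))/(δb²). Then the unique critical point of R on (b(1−δ), b) satisfies b·ln((t + δb)/b) + 2b − 2t − δb = 0, i.e., t = b·(w − δ) where w > 1 is the unique solution of ln(w) = 2w − δ − 2, and R attains its maximum value w·(ln(w) − w + δ + 1)/δ there. -/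
/-!
Substituting `x = (t + δb)/b` turns `R t` into `x (log x - x + δ + 1) / δ`. If `log w = 2w - δ - 2`
with `w ≥ 1`, then `log x ≤ log w + x/w - 1` gives
`w · (w (log w - w + δ + 1) - x (log x - x + δ + 1)) ≥ (w - 1)(w - x)² ≥ 0`,
so `x = w` is a global maximum over `x > 0`. The root `w` exists by the intermediate value theorem
on `[1, 1 + δ]` and is unique because `log x - 2x` is strictly decreasing on `(1, ∞)`.
-/

open Real Set

theorem strictAntiOn_log_sub_two_mul : StrictAntiOn (fun x => log x - 2 * x) (Ioi 1) := by
  intro a ha c _ hac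
  have ha0 : 0 < a := zero_lt_one.trans ha
  have hlog : log c - log a ≤ (c - a) / a := by
    rw [← log_div (by linarith) ha0.ne', sub_div, div_self ha0.ne']
    exact log_le_sub_one_of_pos (div_pos (by linarith) ha0)
  have hquot : (c - a) / a < 2 * (c - a) := by
    rw [div_lt_iff₀ ha0]; nlinarith [mem_Ioi.mp ha]
  show log c - 2 * c < log a - 2 * a
  linarith

theorem exists_one_lt_log_eq_two_mul_sub {δ : ℝ} (hδ : 0 < δ) :
    ∃ w, 1 < w ∧ log w = 2 * w - δ - 2 := by
  set f : ℝ → ℝ := fun w => 2 * w - δ - 2 - log w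
  have hcont : ContinuousOn f (Icc 1 (1 + δ)) :=
    ContinuousOn.sub (by fun_prop)
      (continuousOn_log.mono fun x hx => ne_of_gt (zero_lt_one.trans_le hx.1))
  have hf1 : f 1 = -δ := by simp [f]
  have hf2 : 0 ≤ f (1 + δ) := by
    have := log_le_sub_one_of_pos (show (0 : ℝ) < 1 + δ by linarith)
    simp only [f]
    linarith
  obtain ⟨w, ⟨hw1, -⟩, hw⟩ :=
    intermediate_value_Ioc (by linarith) hcont (show (0 : ℝ) ∈ Ioc (f 1) (f (1 + δ)) by
      rw [hf1]; exact ⟨by linarith, hf2⟩)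
  exact ⟨w, hw1, by simp only [f] at hw; linarith⟩

theorem mul_log_sub_add_le_of_log_eq {δ w x : ℝ} (hw : 1 ≤ w) (hx : 0 < x)
    (hlog : log w = 2 * w - δ - 2) :
    x * (log x - x + δ + 1) ≤ w * (log w - w + δ + 1) := by
  have hw0 : 0 < w := zero_lt_one.trans_le hw
  have hlogx : log x ≤ log w + x / w - 1 := by
    have := log_le_sub_one_of_pos (div_pos hx hw0)
    rw [log_div hx.ne' hw0.ne'] at this
    linarith
  have hwx : w * (x * (x / w)) = x * x := by field_simp
  have key : w * (x * (log x - x + δ + 1)) ≤ w * (w * (log w - w + δ + 1)) := by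
    have hscaled := mul_le_mul_of_nonneg_left (mul_le_mul_of_nonneg_left hlogx hx.le) hw0.le
    rw [hlog] at hscaled ⊢
    nlinarith [mul_nonneg (sub_nonneg.2 hw) (sq_nonneg (w - x))]
  exact le_of_mul_le_mul_left key hw0

theorem bandwidth_ratio_eq {b : ℝ} (hb : b ≠ 0) (δ t : ℝ) :
    (t + δ * b) * (b - t + b * log ((t + δ * b) / b)) / (δ * b ^ 2) =
      (t + δ * b) / b * (log ((t + δ * b) / b) - (t + δ * b) / b + δ + 1) / δ := by
  field_simp
  ring

theorem stmt_16_general (b δ : ℝ) (hb : 0 < b) (hδ0 : 0 < δ) :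
    let R : ℝ → ℝ := fun t =>
      (t + δ * b) * (b - t + b * Real.log ((t + δ * b) / b)) / (δ * b ^ 2)
    ∃ w : ℝ, 1 < w ∧ Real.log w = 2 * w - δ - 2 ∧
      (∀ w' : ℝ, 1 < w' → Real.log w' = 2 * w' - δ - 2 → w' = w) ∧
      b * Real.log ((b * (w - δ) + δ * b) / b) + 2 * b - 2 * (b * (w - δ)) - δ * b = 0 ∧
      (∀ t ∈ Set.Ioo (b * (1 - δ)) b, R t ≤ w * (Real.log w - w + δ + 1) / δ) ∧
      R (b * (w - δ)) = w * (Real.log w - w + δ + 1) / δ := by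
  intro R
  obtain ⟨w, hw1, hw⟩ := exists_one_lt_log_eq_two_mul_sub hδ0
  have hR : ∀ t, R t = (t + δ * b) / b * (log ((t + δ * b) / b) - (t + δ * b) / b + δ + 1) / δ :=
    bandwidth_ratio_eq hb.ne' δ
  have hcrit : (b * (w - δ) + δ * b) / b = w := by field_simp; ring
  refine ⟨w, hw1, hw, fun w' hw1' hw' => ?_, by rw [hcrit, hw]; ring, fun t ht => ?_,
    by rw [hR, hcrit]⟩
  · exact strictAntiOn_log_sub_two_mul.injOn hw1' hw1 (show log w' - 2 * w' = log w - 2 * w by linarith)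
  · have hx : 0 < (t + δ * b) / b := div_pos (by nlinarith [ht.1]) hb
    rw [hR]
    exact div_le_div_of_nonneg_right (mul_log_sub_add_le_of_log_eq hw1.le hx hw) hδ0.le

theorem stmt_16 (b δ : ℝ) (hb : 0 < b) (hδ0 : 0 < δ) (hδ1 : δ ≤ 1) :
    let R : ℝ → ℝ := fun t =>
      (t + δ * b) * (b - t + b * Real.log ((t + δ * b) / b)) / (δ * b ^ 2)
    ∃ w : ℝ, 1 < w ∧ Real.log w = 2 * w - δ - 2 ∧
      (∀ w' : ℝ, 1 < w' → Real.log w' = 2 * w' - δ - 2 → w' = w) ∧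
      b * Real.log ((b * (w - δ) + δ * b) / b) + 2 * b - 2 * (b * (w - δ)) - δ * b = 0 ∧
      (∀ t ∈ Set.Ioo (b * (1 - δ)) b, R t ≤ w * (Real.log w - w + δ + 1) / δ) ∧
      R (b * (w - δ)) = w * (Real.log w - w + δ + 1) / δ :=
  stmt_16_general b δ hb hδ0
end

section
/- For every δ ∈ (0, 1], the values α_δ^l := (2√(δ²(δ+2)) + δ − 1)/(4δ − 1) (for δ > 1/4) and α_δ^u := w·(ln(w) − w + δ + 1)/δ, where w > 1 is the unique solution of ln(w) = 2w − δ − 2, satisfy α_δ^l ≤ α_δ^u. -/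
/-!
Using `log w = 2w - δ - 2`, the upper value is `w (w - 1) / δ`. The Padé bound
`log x ≥ 2 (x - 1) / (x + 1)` turns the defining equation of `w` into `δ (w + 1) ≤ 2 w (w - 1)`,
so the upper value is at least `(w + 1) / 2`, which exceeds `1 + δ / 4` because `log w > 0` forces
`w > 1 + δ / 2`. The lower value is at most `1 + δ / 4`: after clearing the denominator this is
`8 √(δ + 2) ≤ 4 (δ + 2) + 3`, i.e. `(2 √(δ + 2) - 1) (2 √(δ + 2) - 3) ≥ 0`, true as `δ ≥ 1 / 4`.
-/

open Real

/-- The lower bound `α_δ^l`. -/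
noncomputable def alphaLower (δ : ℝ) : ℝ :=
  (2 * √(δ ^ 2 * (δ + 2)) + δ - 1) / (4 * δ - 1)

/-- The upper bound `α_δ^u`, where `w` is the root of `log w = 2 w - δ - 2`. -/
noncomputable def alphaUpper (δ w : ℝ) : ℝ :=
  w * (log w - w + δ + 1) / δ

-- The first term of the series `log x = 2 ∑ t ^ (2k+1) / (2k+1)` with `t = (x - 1) / (x + 1)`.
theorem Real.two_mul_sub_one_div_add_one_le_log {x : ℝ} (hx : 1 ≤ x) :
    2 * (x - 1) / (x + 1) ≤ log x := by
  have hx1 : 0 < x + 1 := by linarith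
  set t := (x - 1) / (x + 1) with ht
  have ht0 : 0 ≤ t := div_nonneg (by linarith) hx1.le
  have ht1 : |t| < 1 := by
    rw [abs_of_nonneg ht0, div_lt_one hx1]
    linarith
  have hlog : log (1 + t) - log (1 - t) = log x := by
    rw [← log_div (by positivity) (by rw [abs_lt] at ht1; linarith)]
    congr 1
    rw [ht]
    field_simp
    ring
  have hfirst := le_hasSum (hasSum_log_sub_log_of_abs_lt_one ht1) 0
    fun k _ => by positivity
  rw [hlog] at hfirst
  simpa [mul_div_assoc] using hfirst

theorem alphaLower_le {δ : ℝ} (hδ : 1 / 4 < δ) : alphaLower δ ≤ 1 + δ / 4 := by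
  have hδ0 : 0 < δ := by linarith
  set A := √(δ + 2)
  have hA2 : A ^ 2 = δ + 2 := sq_sqrt (by linarith)
  have hA : 3 / 2 ≤ A := le_sqrt_of_sq_le (by linarith)
  have hsqrt : √(δ ^ 2 * (δ + 2)) = δ * A := by
    rw [sqrt_mul (sq_nonneg δ), sqrt_sq hδ0.le]
  rw [alphaLower, hsqrt, div_le_iff₀ (by linarith)]
  nlinarith [mul_nonneg (by linarith : (0 : ℝ) ≤ 2 * A - 1) (by linarith : (0 : ℝ) ≤ 2 * A - 3)]

theorem add_one_div_two_le_alphaUpper {δ w : ℝ} (hδ : 0 < δ) (hw : 1 ≤ w)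
    (hweq : log w = 2 * w - δ - 2) : (w + 1) / 2 ≤ alphaUpper δ w := by
  have hpade := two_mul_sub_one_div_add_one_le_log hw
  rw [hweq, div_le_iff₀ (by linarith)] at hpade
  rw [alphaUpper, hweq, le_div_iff₀ hδ]
  nlinarith

theorem stmt_17_general (δ : ℝ) (hδl : 1 / 4 < δ)
    (w : ℝ) (hw : 1 < w) (hweq : Real.log w = 2 * w - δ - 2) :
    (2 * Real.sqrt (δ ^ 2 * (δ + 2)) + δ - 1) / (4 * δ - 1) ≤
      w * (Real.log w - w + δ + 1) / δ := by
  have hlog : 0 < log w := log_pos hw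
  calc alphaLower δ ≤ 1 + δ / 4 := alphaLower_le hδl
    _ ≤ (w + 1) / 2 := by linarith
    _ ≤ alphaUpper δ w := add_one_div_two_le_alphaUpper (by linarith) hw.le hweq

theorem stmt_17 (δ : ℝ) (hδl : 1 / 4 < δ) (hδu : δ ≤ 1)
    (w : ℝ) (hw : 1 < w) (hweq : Real.log w = 2 * w - δ - 2) :
    (2 * Real.sqrt (δ ^ 2 * (δ + 2)) + δ - 1) / (4 * δ - 1) ≤
      w * (Real.log w - w + δ + 1) / δ :=
  stmt_17_general δ hδl w hw hweq
end
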